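/- Let π be a probability measure on a measurable space X, let η : X×X → [0,∞) be measurable with η(x,y) ≥ C for all x,y and some constant C > 0, and let μ be a probability measure on X with μ ≪ π. Then H(μ∣π) ≤ (1/C)·I_η(μ∣π), i.e., the nonlocal logarithmic Sobolev inequality holds with constant C. -/

import Mathlib

open MeasureTheory
open scoped ENNReal Classical

/-- The integrand of the nonlocal relative Fisher information:
`F(r,s) = (r−s)(log r − log s)` for `r,s > 0`, `F(0,0) = 0`, and
`F(r,0) = F(0,r) = ∞` for `r > 0`. -/
noncomputable def Fent (r s : ℝ) : ℝ≥0∞ :=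
  if 0 < r ∧ 0 < s then ENNReal.ofReal ((r - s) * (Real.log r - Real.log s))
  else if r = 0 ∧ s = 0 then 0
  else ⊤

/-- Relative entropy `H(μ∣ν) = ∫ (g log g − g + 1) dν ∈ [0,∞]` with `g = dμ/dν`,
if `μ ≪ ν`, and `H(μ∣ν) = ∞` otherwise. -/
noncomputable def relEnt {X : Type*} [MeasurableSpace X] (μ ν : Measure X) : ℝ≥0∞ :=
  if μ ≪ ν then
    ∫⁻ x, ENNReal.ofReal ((μ.rnDeriv ν x).toReal * Real.log (μ.rnDeriv ν x).toReal
        - (μ.rnDeriv ν x).toReal + 1) ∂ν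
  else ⊤

/-- The nonlocal Fisher information
`I_η(μ∣π) = (1/2) ∬_{x≠y} F(f(x),f(y)) η(x,y) dπ(x) dπ(y)` with `f = dμ/dπ` if `μ ≪ π`,
and `∞` otherwise. -/
noncomputable def fisher {X : Type*} [MeasurableSpace X]
    (η : X → X → ℝ) (μ π : Measure X) : ℝ≥0∞ :=
  if μ ≪ π then
    (1/2 : ℝ≥0∞) * ∫⁻ x, ∫⁻ y,
      (if x ≠ y then
        Fent (μ.rnDeriv π x).toReal (μ.rnDeriv π y).toReal * ENNReal.ofReal (η x y)
       else 0) ∂π ∂π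
  else ⊤

/-!
With `f = dμ/dπ`, the elementary inequality
`klFun r + klFun s ≤ (r - s)(log r - log s) + 2 (r - 1)(s - 1)` integrates over `π ⊗ π` to
`2 H(μ∣π) ≤ ∬ F(f(x), f(y))`, because `∫ (f - 1) dπ = 0` kills the cross term. The integrand
`F(f(x), f(y))` vanishes on the diagonal, so `η ≥ C` bounds the right-hand side by `2 I_η(μ∣π) / C`.
Writing the cross term as `2rs + 2 - 2r - 2s` and moving `2r + 2s` to the other side keeps every
term nonnegative, so the argument runs in `ℝ≥0∞` without any integrability assumption.
-/

open InformationTheory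

lemma Fent_self {r : ℝ} (hr : 0 ≤ r) : Fent r r = 0 := by
  rcases hr.lt_or_eq with h | rfl <;> simp [Fent, *]

/-- The defect is `r (s - 1 - log s) + s (r - 1 - log r) ≥ 0`. -/
lemma klFun_add_klFun_le {r s : ℝ} (hr : 0 < r) (hs : 0 < s) :
    klFun r + klFun s ≤ (r - s) * (Real.log r - Real.log s) + 2 * (r - 1) * (s - 1) := by
  have hlr := Real.log_le_sub_one_of_pos hr
  have hls := Real.log_le_sub_one_of_pos hs
  simp only [klFun_apply]
  nlinarith [mul_le_mul_of_nonneg_left hlr hs.le, mul_le_mul_of_nonneg_left hls hr.le]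

lemma ofReal_klFun_add_two_mul {r : ℝ} (hr : 0 ≤ r) :
    ENNReal.ofReal (klFun r) + 2 * ENNReal.ofReal r = ENNReal.ofReal (klFun r + 2 * r) := by
  rw [ENNReal.ofReal_add (klFun_nonneg hr) (by positivity), ENNReal.ofReal_mul zero_le_two,
    ENNReal.ofReal_ofNat]

lemma ofReal_klFun_add_le_Fent {r s : ℝ} (hr : 0 ≤ r) (hs : 0 ≤ s) :
    (ENNReal.ofReal (klFun r) + 2 * ENNReal.ofReal r)
        + (ENNReal.ofReal (klFun s) + 2 * ENNReal.ofReal s)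
      ≤ Fent r s + (2 * ENNReal.ofReal r * ENNReal.ofReal s + 2) := by
  rcases hr.lt_or_eq with hr | rfl <;> rcases hs.lt_or_eq with hs | rfl
  · have hrs : 2 * ENNReal.ofReal r * ENNReal.ofReal s + 2 = ENNReal.ofReal (2 * r * s + 2) := by
      rw [ENNReal.ofReal_add (by positivity) zero_le_two, ENNReal.ofReal_mul (by positivity),
        ENNReal.ofReal_mul zero_le_two, ENNReal.ofReal_ofNat]
    rw [ofReal_klFun_add_two_mul hr.le, ofReal_klFun_add_two_mul hs.le,
      ← ENNReal.ofReal_add (add_nonneg (klFun_nonneg hr.le) (by positivity))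
        (add_nonneg (klFun_nonneg hs.le) (by positivity)),
      hrs, Fent, if_pos ⟨hr, hs⟩]
    refine (ENNReal.ofReal_le_ofReal ?_).trans ENNReal.ofReal_add_le
    linarith [klFun_add_klFun_le hr hs]
  · simp [Fent, hr.ne']
  · simp [Fent, hs.ne']
  · simp [Fent, klFun_zero, one_add_one_eq_two]

lemma lintegral_lintegral_add_of_isProbabilityMeasure {X : Type*} [MeasurableSpace X]
    {π : Measure X} [IsProbabilityMeasure π] (g : X → ℝ≥0∞) :
    ∫⁻ x, ∫⁻ y, (g x + g y) ∂π ∂π = 2 * ∫⁻ x, g x ∂π := by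
  simp [lintegral_add_left measurable_const, lintegral_add_right _ measurable_const, two_mul]

lemma two_mul_lintegral_klFun_le_lintegral_lintegral_Fent {X : Type*} [MeasurableSpace X]
    {π : Measure X} [IsProbabilityMeasure π] {f : X → ℝ} (hf : Measurable f)
    (hf0 : ∀ x, 0 ≤ f x) (hf1 : ∫⁻ x, ENNReal.ofReal (f x) ∂π = 1) :
    2 * ∫⁻ x, ENNReal.ofReal (klFun (f x)) ∂π ≤ ∫⁻ x, ∫⁻ y, Fent (f x) (f y) ∂π ∂π := by
  have hf' : Measurable fun x ↦ ENNReal.ofReal (f x) := hf.ennreal_ofReal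
  have hlin : ∀ c : ℝ≥0∞, ∫⁻ y, (c * ENNReal.ofReal (f y) + 2) ∂π = c + 2 := fun c ↦ by
    simp [lintegral_add_right _ measurable_const, lintegral_const_mul c hf', hf1]
  suffices h : 2 * ∫⁻ x, ENNReal.ofReal (klFun (f x)) ∂π + 4
      ≤ ∫⁻ x, ∫⁻ y, Fent (f x) (f y) ∂π ∂π + 4 from
    (ENNReal.add_le_add_iff_right (by norm_num)).1 h
  calc 2 * ∫⁻ x, ENNReal.ofReal (klFun (f x)) ∂π + 4
      = ∫⁻ x, ∫⁻ y, ((ENNReal.ofReal (klFun (f x)) + 2 * ENNReal.ofReal (f x))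
          + (ENNReal.ofReal (klFun (f y)) + 2 * ENNReal.ofReal (f y))) ∂π ∂π := by
        rw [lintegral_lintegral_add_of_isProbabilityMeasure,
          lintegral_add_right _ (hf'.const_mul 2),
          lintegral_const_mul 2 hf', hf1]
        ring
    _ ≤ ∫⁻ x, ∫⁻ y, (Fent (f x) (f y)
          + (2 * ENNReal.ofReal (f x) * ENNReal.ofReal (f y) + 2)) ∂π ∂π :=
        lintegral_mono fun x ↦ lintegral_mono fun y ↦ ofReal_klFun_add_le_Fent (hf0 x) (hf0 y)
    _ = ∫⁻ x, ∫⁻ y, Fent (f x) (f y) ∂π ∂π + 4 := by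
        have hinner : ∀ x, ∫⁻ y, (Fent (f x) (f y)
            + (2 * ENNReal.ofReal (f x) * ENNReal.ofReal (f y) + 2)) ∂π
            = ∫⁻ y, Fent (f x) (f y) ∂π + (2 * ENNReal.ofReal (f x) + 2) := fun x ↦ by
          rw [lintegral_add_right _ ((hf'.const_mul _).add_const 2), hlin]
        rw [lintegral_congr hinner, lintegral_add_right _ ((hf'.const_mul 2).add_const 2), hlin]
        norm_num

lemma ofReal_mul_lintegral_lintegral_le_offDiag {X : Type*} [MeasurableSpace X]
    (π : Measure X) {h : X → X → ℝ≥0∞} (hh : ∀ x, h x x = 0) {η : X → X → ℝ} {C : ℝ}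
    (hη : ∀ x y, C ≤ η x y) :
    ENNReal.ofReal C * ∫⁻ x, ∫⁻ y, h x y ∂π ∂π
      ≤ ∫⁻ x, ∫⁻ y, (if x ≠ y then h x y * ENNReal.ofReal (η x y) else 0) ∂π ∂π := by
  rw [← lintegral_const_mul' _ _ ENNReal.ofReal_ne_top]
  refine lintegral_mono fun x ↦ ?_
  rw [← lintegral_const_mul' _ _ ENNReal.ofReal_ne_top]
  refine lintegral_mono fun y ↦ ?_
  by_cases hxy : x = y
  · simp [hxy, hh]
  · rw [if_pos hxy, mul_comm]
    exact mul_le_mul_right (ENNReal.ofReal_le_ofReal (hη x y)) _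

theorem nonlocal_logSobolev_general {X : Type*} [MeasurableSpace X]
    (π μ : Measure X) [IsProbabilityMeasure π] [IsProbabilityMeasure μ]
    (η : X → X → ℝ)
    (C : ℝ) (hC : 0 < C) (hη : ∀ x y, C ≤ η x y)
    (hac : μ ≪ π) :
    relEnt μ π ≤ ENNReal.ofReal (1 / C) * fisher η μ π := by
  rw [relEnt, if_pos hac, fisher, if_pos hac]
  have hf1 : ∫⁻ x, ENNReal.ofReal (μ.rnDeriv π x).toReal ∂π = 1 := by
    rw [lintegral_congr_ae ((Measure.rnDeriv_lt_top μ π).mono fun x hx ↦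
      ENNReal.ofReal_toReal hx.ne), Measure.lintegral_rnDeriv hac, measure_univ]
  have hent := two_mul_lintegral_klFun_le_lintegral_lintegral_Fent
    (Measure.measurable_rnDeriv μ π).ennreal_toReal (fun _ ↦ ENNReal.toReal_nonneg) hf1
  have hfisher := ofReal_mul_lintegral_lintegral_le_offDiag π
    (h := fun x y ↦ Fent (μ.rnDeriv π x).toReal (μ.rnDeriv π y).toReal)
    (fun _ ↦ Fent_self ENNReal.toReal_nonneg) hη
  simp only [klFun_apply, add_sub_right_comm] at hent
  set H := ∫⁻ x, ENNReal.ofReal ((μ.rnDeriv π x).toReal * Real.log (μ.rnDeriv π x).toReal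
    - (μ.rnDeriv π x).toReal + 1) ∂π
  calc H = ENNReal.ofReal (1 / C) * ENNReal.ofReal C * ((1 / 2) * 2 * H) := by
        rw [← ENNReal.ofReal_mul (by positivity), one_div_mul_cancel hC.ne', ENNReal.ofReal_one,
          ENNReal.div_mul_cancel two_ne_zero ENNReal.ofNat_ne_top]
        simp
    _ = ENNReal.ofReal (1 / C) * ((1 / 2) * (ENNReal.ofReal C * (2 * H))) := by ring
    _ ≤ _ := by gcongr; exact (mul_le_mul_right hent _).trans hfisher

/-- **Nonlocal logarithmic Sobolev inequality for kernels bounded below.**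
If `η(x,y) ≥ C > 0` for all `x,y` and `μ ≪ π` are probability measures, then
`H(μ∣π) ≤ (1/C)·I_η(μ∣π)`. -/
theorem nonlocal_logSobolev {X : Type*} [MeasurableSpace X]
    (π μ : Measure X) [IsProbabilityMeasure π] [IsProbabilityMeasure μ]
    (η : X → X → ℝ) (hηmeas : Measurable (Function.uncurry η))
    (C : ℝ) (hC : 0 < C) (hη : ∀ x y, C ≤ η x y)
    (hac : μ ≪ π) :
    relEnt μ π ≤ ENNReal.ofReal (1 / C) * fisher η μ π :=
  nonlocal_logSobolev_general π μ η C hC hη hac
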